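/- arXiv:1506.03883 — 2 statements merged into one kernel-verified Lean document; each statement's English description precedes it below -/
import Mathlib

section
/- A finite game graph G yields recurring hierarchical information if, and only if, there exists a natural number k such that every gap of every play of G has length at most k (i.e., G has finite gap size). -/
/-- A finite game graph for `n` players: positions `V` with initial position `init`,
action sets `A i`, observation sets `B i`, a move relation labelled by action
profiles (with no dead ends), and observation functions. -/
structure GameGraph (n : ℕ) (V : Type) (A : Fin n → Type) (B : Fin n → Type) where
  init : V
  move : V → (∀ i, A i) → V → Prop
  noDeadEnd : ∀ v a, ∃ w, move v a w
  obs : ∀ i : Fin n, V → B i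

/-- A Moore machine with finite state set `Q`, input alphabet `σ`, output alphabet `γ`. -/
structure Moore (σ γ : Type) where
  Q : Type
  finQ : Fintype Q
  q0 : Q
  δ : Q → σ → Q
  out : Q → γ

namespace Moore

/-- The output letter of a Moore machine after reading a word. -/
def output {σ γ : Type} (mc : Moore σ γ) (w : List σ) : γ :=
  mc.out (w.foldl mc.δ mc.q0)

/-- The output word of a Moore machine along a word: the `k`-th letter is the
output after reading the prefix of length `k+1`. -/
def outWord {σ γ : Type} (mc : Moore σ γ) (w : List σ) : List γ :=
  ((w.scanl mc.δ mc.q0).drop 1).map mc.out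

end Moore

/-- A deterministic parity automaton over alphabet `α`. -/
structure ParityAut (α : Type) where
  Q : Type
  finQ : Fintype Q
  q0 : Q
  δ : Q → α → Q
  prio : Q → ℕ

namespace ParityAut

/-- The run of a deterministic parity automaton on an infinite word. -/
def run {α : Type} (d : ParityAut α) (f : ℕ → α) : ℕ → d.Q
  | 0 => d.q0
  | t + 1 => d.δ (run d f t) (f t)

/-- Parity acceptance: the least priority occurring infinitely often is even. -/
def Accepts {α : Type} (d : ParityAut α) (f : ℕ → α) : Prop :=
  Even (sInf { p | ∃ᶠ t in Filter.atTop, d.prio (d.run f t) = p })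

end ParityAut

/-- A deterministic Büchi automaton over alphabet `α` with state set `σ`. -/
structure DetBuchi (α σ : Type) where
  q0 : σ
  δ : σ → α → σ
  accept : Set σ

namespace DetBuchi

/-- The run of a deterministic Büchi automaton on an infinite word. -/
def run {α σ : Type} (d : DetBuchi α σ) (f : ℕ → α) : ℕ → σ
  | 0 => d.q0
  | t + 1 => d.δ (run d f t) (f t)

/-- Büchi acceptance: the run visits accepting states infinitely often. -/
def Accepts {α σ : Type} (d : DetBuchi α σ) (f : ℕ → α) : Prop :=
  ∃ᶠ t in Filter.atTop, d.run f t ∈ d.accept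

end DetBuchi

namespace GameGraph

variable {n : ℕ} {V : Type} {A B : Fin n → Type}

/-- Two positions are linked by a move (for some action profile). -/
def step (G : GameGraph n V A B) (u w : V) : Prop := ∃ a, G.move u a w

/-- A history: a nonempty sequence starting at the initial position, each
consecutive pair lying on a move. -/
def IsHistory (G : GameGraph n V A B) (π : List V) : Prop :=
  π.head? = some G.init ∧ π.Chain' G.step

/-- The observation sequence of player `i` along a history (the observation at
the initial position is discarded). -/
def obsSeq (G : GameGraph n V A B) (i : Fin n) (π : List V) : List (B i) :=
  (π.drop 1).map (G.obs i)

/-- Histories are indistinguishable for player `i` if they yield the same observations. -/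
def Indist (G : GameGraph n V A B) (i : Fin n) (π π' : List V) : Prop :=
  G.obsSeq i π = G.obsSeq i π'

/-- The information set of player `i` at history `π`. -/
def InfoSet (G : GameGraph n V A B) (i : Fin n) (π : List V) : Set (List V) :=
  { π' | G.IsHistory π' ∧ G.Indist i π π' }

/-- A history yields hierarchical information if the information sets of players
are totally ordered by inclusion. -/
def HistHI (G : GameGraph n V A B) (π : List V) : Prop :=
  ∀ i j : Fin n, G.InfoSet i π ⊆ G.InfoSet j π ∨ G.InfoSet j π ⊆ G.InfoSet i π

/-- Static hierarchical information: there is a total order of the players such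
that along every history, the information sets respect this order. -/
def StaticHI (G : GameGraph n V A B) : Prop :=
  ∃ ord : Fin n → Fin n → Prop, IsLinearOrder (Fin n) ord ∧
    ∀ i j : Fin n, ord i j → ∀ π, G.IsHistory π → G.InfoSet i π ⊆ G.InfoSet j π

/-- Hierarchical observation: there is a total order of the players such that
the observation of a smaller player determines that of a bigger player, positionally. -/
def HierObs (G : GameGraph n V A B) : Prop :=
  ∃ ord : Fin n → Fin n → Prop, IsLinearOrder (Fin n) ord ∧
    ∀ i j : Fin n, ord i j → ∀ v v' : V, G.obs i v = G.obs i v' → G.obs j v = G.obs j v'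

/-- Dynamic hierarchical information: every history yields hierarchical information. -/
def DynamicHI (G : GameGraph n V A B) : Prop := ∀ π, G.IsHistory π → G.HistHI π

/-- The prefix `v₀ … v_t` of a play, as a list. -/
def playPrefix (f : ℕ → V) (t : ℕ) : List V := (List.range (t + 1)).map f

/-- A play: an infinite sequence all of whose prefixes are histories. -/
def IsPlay (G : GameGraph n V A B) (f : ℕ → V) : Prop :=
  ∀ t, G.IsHistory (playPrefix f t)

/-- A play yields recurring hierarchical information if infinitely many of its
prefix histories yield hierarchical information. -/
def PlayRecurringHI (G : GameGraph n V A B) (f : ℕ → V) : Prop :=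
  ∀ T, ∃ t, T ≤ t ∧ G.HistHI (playPrefix f t)

/-- A game yields recurring hierarchical information if every play does. -/
def RecurringHI (G : GameGraph n V A B) : Prop :=
  ∀ f, G.IsPlay f → G.PlayRecurringHI f

/-- `[t, t+ℓ]` is a gap of the play `f`: no prefix of length `r ∈ [t, t+ℓ]` yields
hierarchical information.  The length of this gap is `ℓ + 1`. -/
def IsGap (G : GameGraph n V A B) (f : ℕ → V) (t ℓ : ℕ) : Prop :=
  ∀ r, t ≤ r → r ≤ t + ℓ → ¬ G.HistHI (playPrefix f r)

/-- Information-consistency of a strategy profile: each component is constant on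
indistinguishability classes of histories. -/
def Consistent (G : GameGraph n V A B) (s : ∀ i, List V → A i) : Prop :=
  ∀ (i : Fin n) (π π' : List V),
    G.IsHistory π → G.IsHistory π' → G.Indist i π π' → s i π = s i π'

/-- A play follows a strategy profile. -/
def Follows (G : GameGraph n V A B) (s : ∀ i, List V → A i) (f : ℕ → V) : Prop :=
  f 0 = G.init ∧ ∀ t, ∃ a, G.move (f t) a (f (t + 1)) ∧ ∀ i, a i = s i (playPrefix f t)

/-- A distributed winning strategy for winning condition `W`: an information-consistent
profile all of whose outcomes lie in `W`. -/
def WinningProfile (G : GameGraph n V A B) (W : Set (ℕ → V)) (s : ∀ i, List V → A i) : Prop :=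
  G.Consistent s ∧ ∀ f, G.Follows s f → f ∈ W

/-- A finite-state strategy for player `i`: implemented by a Moore machine reading
the observation sequence of the history. -/
def FinStateStrategy (G : GameGraph n V A B) (i : Fin n) (si : List V → A i) : Prop :=
  ∃ mc : Moore (B i) (A i), ∀ π, G.IsHistory π → si π = mc.output (G.obsSeq i π)

/-- The game admits a distributed winning strategy for `W`. -/
def HasDWS (G : GameGraph n V A B) (W : Set (ℕ → V)) : Prop :=
  ∃ s : ∀ i, List V → A i, G.WinningProfile W s

/-- The game admits a finite-state distributed winning strategy for `W`. -/
def HasFinDWS (G : GameGraph n V A B) (W : Set (ℕ → V)) : Prop :=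
  ∃ s : ∀ i, List V → A i, G.WinningProfile W s ∧ ∀ i, G.FinStateStrategy i (s i)

/-- `i ⪯_π j` : at history `π`, player `i` is at least as informed as player `j`. -/
def infoLE (G : GameGraph n V A B) (π : List V) (i j : Fin n) : Prop :=
  G.InfoSet i π ⊆ G.InfoSet j π

/-- The information rank of player `i` at history `π`: the number of players `j`
with `j ≺_π i`, or with `j < i` and `j ≈_π i`. -/
noncomputable def rank (G : GameGraph n V A B) (i : Fin n) (π : List V) : ℕ :=
  Nat.card {j : Fin n //
    (G.infoLE π j i ∧ ¬ G.infoLE π i j) ∨ (j < i ∧ G.infoLE π j i ∧ G.infoLE π i j)}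

/-- The signal `λ_j^i`: the set of observations of player `i` at the last positions of
histories in the information set of player `j`. -/
def lam (G : GameGraph n V A B) (i j : Fin n) (π : List V) : Set (B i) :=
  { b | ∃ π', π' ∈ G.InfoSet j π ∧ ∃ v, π'.getLast? = some v ∧ G.obs i v = b }

/-- Players `i` and `j` cross at stage `ℓ` of the play `f`. -/
def Crossing (G : GameGraph n V A B) (f : ℕ → V) (ℓ : ℕ) (i j : Fin n) : Prop :=
  G.InfoSet i (playPrefix f ℓ) ⊂ G.InfoSet j (playPrefix f ℓ) ∧
  G.InfoSet j (playPrefix f (ℓ + 1)) ⊂ G.InfoSet i (playPrefix f (ℓ + 1))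

/-- A game is cross-free if no two players cross at any stage of any play. -/
def CrossFree (G : GameGraph n V A B) : Prop :=
  ∀ f, G.IsPlay f → ∀ (ℓ : ℕ) (i j : Fin n), ¬ G.Crossing f ℓ i j

end GameGraph

/-! The knowledge of a history `π` records, for each pair of players `i, j`, the pairs `(v, e)`
such that some history in the information set of `i` at `π` ends at `v` and lies in the
information set of `j` iff `e`. Together with the last position it ranges over a finite set,
it decides whether `π` yields hierarchical information, and after a move it depends only on the
previous knowledge and the new position. So if a gap were longer than the number of these
states, two prefixes inside it would carry the same state; looping forever between them gives a
play all of whose late prefixes carry states from inside the gap, hence never again yield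
hierarchical information. Conversely, a gap bound `k` forces hierarchical information in every
window of `k + 1` rounds. -/

/-- Runs through `0, 1, …, b` and then cycles through `a + 1, …, b` forever. -/
def loopIndex (a b : ℕ) : ℕ → ℕ
  | 0 => 0
  | m + 1 => if loopIndex a b m = b then a + 1 else loopIndex a b m + 1

theorem loopIndex_succ (a b m : ℕ) : ∃ k, loopIndex a b (m + 1) = k + 1 ∧
    (k = loopIndex a b m ∨ k = a ∧ loopIndex a b m = b) := by
  by_cases hm : loopIndex a b m = b
  · exact ⟨a, by simp [loopIndex, hm], Or.inr ⟨rfl, hm⟩⟩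
  · exact ⟨loopIndex a b m, by simp [loopIndex, hm], Or.inl rfl⟩

theorem loopIndex_mem_Icc {a b : ℕ} (hab : a < b) (m : ℕ) :
    loopIndex a b m ∈ Set.Icc (min m a) b := by
  induction m with
  | zero => simp [loopIndex]
  | succ m ih =>
    obtain ⟨ih₁, ih₂⟩ := ih
    by_cases hm : loopIndex a b m = b
    · simp only [loopIndex, hm, if_true, Set.mem_Icc]
      omega
    · simp only [loopIndex, hm, if_false, Set.mem_Icc]
      omega

namespace GameGraph

variable {n : ℕ} {V : Type} {A B : Fin n → Type} {G : GameGraph n V A B}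

theorem isHistory_iff {π : List V} :
    G.IsHistory π ↔ π.head? = some G.init ∧ π.IsChain G.step :=
  Iff.rfl

theorem IsHistory.ne_nil {π : List V} (h : G.IsHistory π) : π ≠ [] := by
  rintro rfl
  simp [IsHistory] at h

theorem obsSeq_append_singleton (i : Fin n) {π : List V} (hπ : π ≠ []) (u : V) :
    G.obsSeq i (π ++ [u]) = G.obsSeq i π ++ [G.obs i u] := by
  have : 1 ≤ π.length := List.length_pos_iff.mpr hπ
  simp [obsSeq, List.drop_append_of_le_length this]

theorem isHistory_append_singleton {π : List V} (hπ : π ≠ []) (u : V) :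
    G.IsHistory (π ++ [u]) ↔ G.IsHistory π ∧ ∃ v ∈ π.getLast?, G.step v u := by
  rw [isHistory_iff, isHistory_iff, List.isChain_append, List.head?_append_of_ne_nil _ hπ,
    List.getLast?_eq_some_getLast hπ]
  simp [and_assoc]

theorem isPlay_iff {f : ℕ → V} :
    G.IsPlay f ↔ f 0 = G.init ∧ ∀ t, G.step (f t) (f (t + 1)) := by
  simp only [IsPlay, isHistory_iff, playPrefix, List.isChain_map, List.isChain_range_succ]
  constructor
  · intro h
    exact ⟨by simpa using (h 0).1, fun t => (h (t + 1)).2 t t.lt_succ_self⟩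
  · rintro ⟨h0, hstep⟩ t
    exact ⟨by simp [List.range_succ_eq_map, h0], fun m _ => hstep m⟩

theorem mem_infoSet_append_singleton {π ρ : List V} (hπ : π ≠ []) (hρ : ρ ≠ []) (i : Fin n)
    (w u : V) :
    ρ ++ [u] ∈ G.InfoSet i (π ++ [w]) ↔
      ρ ∈ G.InfoSet i π ∧ (∃ v ∈ ρ.getLast?, G.step v u) ∧ G.obs i w = G.obs i u := by
  simp only [InfoSet, Indist, Set.mem_ofPred_eq, isHistory_append_singleton hρ,
    obsSeq_append_singleton i hπ, obsSeq_append_singleton i hρ, List.append_singleton_inj]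
  tauto

theorem exists_eq_append_singleton_of_mem_infoSet {π π' : List V} (hπ : π ≠ []) {i : Fin n}
    {w : V} (h : π' ∈ G.InfoSet i (π ++ [w])) : ∃ ρ u, ρ ≠ [] ∧ π' = ρ ++ [u] := by
  obtain ⟨hist, hobs⟩ := h
  obtain ⟨x, xs, rfl⟩ := List.exists_cons_of_ne_nil hist.ne_nil
  rcases List.eq_nil_or_concat' xs with rfl | ⟨ys, u, rfl⟩
  · rw [Indist, obsSeq_append_singleton i hπ] at hobs
    simp [obsSeq] at hobs
  · exact ⟨x :: ys, u, List.cons_ne_nil x ys, rfl⟩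

variable (G) in
def knowledge (π : List V) (i j : Fin n) : Set (V × Prop) :=
  {p | ∃ π' ∈ G.InfoSet i π, π'.getLast? = some p.1 ∧ (p.2 ↔ π' ∈ G.InfoSet j π)}

theorem infoSet_subset_iff (π : List V) (i j : Fin n) :
    G.InfoSet i π ⊆ G.InfoSet j π ↔ ∀ v, (v, False) ∉ G.knowledge π i j := by
  constructor
  · rintro h v ⟨π', hi, -, hj⟩
    exact hj.2 (h hi)
  · intro h π' hi
    by_contra hj
    obtain ⟨v, hv⟩ := Option.isSome_iff_exists.mp (List.getLast?_isSome.mpr hi.1.ne_nil)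
    exact h v ⟨π', hi, hv, iff_of_false id hj⟩

theorem histHI_congr {π σ : List V} (h : G.knowledge π = G.knowledge σ) :
    G.HistHI π ↔ G.HistHI σ := by
  simp only [HistHI, infoSet_subset_iff, h]

theorem mem_knowledge_append_singleton {π : List V} (hπ : π ≠ []) (w : V) (i j : Fin n)
    (u : V) (e : Prop) :
    (u, e) ∈ G.knowledge (π ++ [w]) i j ↔ ∃ v e₀, (v, e₀) ∈ G.knowledge π i j ∧ G.step v u ∧
      G.obs i w = G.obs i u ∧ (e ↔ e₀ ∧ G.obs j w = G.obs j u) := by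
  constructor
  · rintro ⟨π', hi, hlast, he⟩
    obtain ⟨ρ, u', hρ, rfl⟩ := exists_eq_append_singleton_of_mem_infoSet hπ hi
    obtain rfl : u' = u := by simpa using hlast
    obtain ⟨hρi, ⟨v, hv, hstep⟩, hobs⟩ := (mem_infoSet_append_singleton hπ hρ i w u').mp hi
    refine ⟨v, ρ ∈ G.InfoSet j π, ⟨ρ, hρi, hv, Iff.rfl⟩, hstep, hobs, ?_⟩
    refine he.trans ?_
    rw [mem_infoSet_append_singleton hπ hρ]
    exact ⟨fun h => ⟨h.1, h.2.2⟩, fun h => ⟨h.1, ⟨v, hv, hstep⟩, h.2⟩⟩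
  · rintro ⟨v, e₀, ⟨ρ, hρi, hv, he₀⟩, hstep, hobs, he⟩
    have hρ : ρ ≠ [] := hρi.1.ne_nil
    refine ⟨ρ ++ [u], (mem_infoSet_append_singleton hπ hρ i w u).mpr
      ⟨hρi, ⟨v, hv, hstep⟩, hobs⟩, List.getLast?_concat, ?_⟩
    change e ↔ _
    rw [he, show e₀ ↔ ρ ∈ G.InfoSet j π from he₀, mem_infoSet_append_singleton hπ hρ]
    exact ⟨fun h => ⟨h.1, ⟨v, hv, hstep⟩, h.2⟩, fun h => ⟨h.1, h.2.2⟩⟩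

theorem knowledge_append_singleton_congr {π σ : List V} (hπ : π ≠ []) (hσ : σ ≠ [])
    (h : G.knowledge π = G.knowledge σ) (w : V) :
    G.knowledge (π ++ [w]) = G.knowledge (σ ++ [w]) := by
  ext i j ⟨u, e⟩
  rw [mem_knowledge_append_singleton hπ, mem_knowledge_append_singleton hσ, h]

theorem playPrefix_succ (f : ℕ → V) (t : ℕ) :
    playPrefix f (t + 1) = playPrefix f t ++ [f (t + 1)] := by
  simp [playPrefix, List.range_succ]

theorem playPrefix_ne_nil (f : ℕ → V) (t : ℕ) : playPrefix f t ≠ [] := by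
  simp [playPrefix]

theorem IsPlay.comp_of_jumps {f : ℕ → V} (hf : G.IsPlay f) {h : ℕ → ℕ} (h0 : h 0 = 0)
    (hjump : ∀ m, ∃ k, h (m + 1) = k + 1 ∧ f k = f (h m)) : G.IsPlay (f ∘ h) := by
  rw [isPlay_iff] at hf ⊢
  refine ⟨by simpa [h0] using hf.1, fun m => ?_⟩
  obtain ⟨k, hk, hfk⟩ := hjump m
  simpa [hk, hfk] using hf.2 k

theorem knowledge_playPrefix_comp_of_jumps {f : ℕ → V} {h : ℕ → ℕ} (h0 : h 0 = 0)
    (hjump : ∀ m, ∃ k, h (m + 1) = k + 1 ∧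
      G.knowledge (playPrefix f k) = G.knowledge (playPrefix f (h m))) (m : ℕ) :
    G.knowledge (playPrefix (f ∘ h) m) = G.knowledge (playPrefix f (h m)) := by
  induction m with
  | zero => simp [playPrefix, h0]
  | succ m ih =>
    obtain ⟨k, hk, hK⟩ := hjump m
    rw [playPrefix_succ, hk, playPrefix_succ f k, Function.comp_apply, hk]
    exact knowledge_append_singleton_congr (playPrefix_ne_nil _ _) (playPrefix_ne_nil _ _)
      (ih.trans hK.symm) _

theorem RecurringHI.ne_of_mem_gap (hrec : G.RecurringHI) {f : ℕ → V} (hf : G.IsPlay f)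
    {t ℓ : ℕ} (hgap : G.IsGap f t ℓ) {a b : ℕ} (hta : t ≤ a) (hab : a < b) (hb : b ≤ t + ℓ) :
    (f a, G.knowledge (playPrefix f a)) ≠ (f b, G.knowledge (playPrefix f b)) := by
  intro heq
  obtain ⟨hv, hK⟩ := Prod.mk.inj heq
  have hjump (m : ℕ) : ∃ k, loopIndex a b (m + 1) = k + 1 ∧ f k = f (loopIndex a b m) ∧
      G.knowledge (playPrefix f k) = G.knowledge (playPrefix f (loopIndex a b m)) := by
    obtain ⟨k, hk, rfl | ⟨rfl, hm⟩⟩ := loopIndex_succ a b m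
    · exact ⟨_, hk, rfl, rfl⟩
    · exact ⟨k, hk, by rw [hv, hm], by rw [hK, hm]⟩
  have hplay := hf.comp_of_jumps rfl fun m => (hjump m).imp fun _ hk => ⟨hk.1, hk.2.1⟩
  obtain ⟨t', htt', hHI⟩ := hrec _ hplay t
  rw [histHI_congr (knowledge_playPrefix_comp_of_jumps rfl
    (fun m => (hjump m).imp fun _ hk => ⟨hk.1, hk.2.2⟩) t')] at hHI
  have hmem := loopIndex_mem_Icc hab t'
  exact hgap _ ((le_min htt' hta).trans hmem.1) (hmem.2.trans hb) hHI

theorem RecurringHI.gap_length_le_card [Finite V] (hrec : G.RecurringHI) {f : ℕ → V}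
    (hf : G.IsPlay f) {t ℓ : ℕ} (hgap : G.IsGap f t ℓ) :
    ℓ + 1 ≤ Nat.card (V × (Fin n → Fin n → Set (V × Prop))) := by
  have hinj : Function.Injective fun r : Fin (ℓ + 1) =>
      (f (t + r), G.knowledge (playPrefix f (t + r))) :=
    .of_lt_imp_ne fun r s hrs => hrec.ne_of_mem_gap hf hgap (Nat.le_add_right t r)
      (by simpa using hrs) (by omega)
  simpa using Nat.card_le_card_of_injective _ hinj

theorem recurringHI_of_gap_length_le {k : ℕ}
    (hk : ∀ f, G.IsPlay f → ∀ t ℓ, G.IsGap f t ℓ → ℓ + 1 ≤ k) : G.RecurringHI := by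
  intro f hf T
  by_contra! hT
  have := hk f hf T k fun r hr _ => hT r hr
  omega

end GameGraph

theorem statement14_general {n : ℕ} {V : Type} {A B : Fin n → Type}
    [Fintype V]
    (G : GameGraph n V A B) :
    G.RecurringHI ↔ ∃ k : ℕ, ∀ f, G.IsPlay f → ∀ t ℓ, G.IsGap f t ℓ → ℓ + 1 ≤ k :=
  ⟨fun hrec => ⟨_, fun _ hf _ _ hgap => hrec.gap_length_le_card hf hgap⟩,
    fun ⟨_, hk⟩ => GameGraph.recurringHI_of_gap_length_le hk⟩

/-- A finite game graph yields recurring hierarchical information iff it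
has finite gap size, i.e., there is a uniform bound `k` on the lengths of gaps of its plays. -/
theorem statement14 {n : ℕ} {V : Type} {A B : Fin n → Type}
    [Fintype V] [∀ i, Fintype (A i)] [∀ i, Fintype (B i)]
    (G : GameGraph n V A B) :
    G.RecurringHI ↔ ∃ k : ℕ, ∀ f, G.IsPlay f → ∀ t ℓ, G.IsGap f t ℓ → ℓ + 1 ≤ k :=
  statement14_general G
end

section
/- For every m ≥ 1, letting p_1 < p_2 < ⋯ < p_m be the first m prime numbers, there exists a game graph for two players with at most 4 + (p_1 + p_2 + ⋯ + p_m) positions that yields recurring hierarchical information and has a play containing a gap of length at least (p_1 · p_2 ⋯ p_m) − 1; consequently, the gap size of game graphs with recurring hierarchical information can grow exponentially with the number of positions. -/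
/-!
The game has an initial position, a cycle of length `p_k` for each `k < m`, and positions `x`, `u`,
`y` with moves `x → y`, `u → y`, `y → x`; a play enters one cycle and may leave it for `x` or `u`,
but only at a time not divisible by the length of that cycle. Player 0 cannot tell `x` from the
cycles, player 1 cannot tell `u` from them.

Along a play that stays in a cycle, at a time `r` not divisible by some `p_k`, leaving cycle `k`
for `x` exactly at time `r` is noticed only by player 1, and leaving it for `u` only by player 0:
the information sets are incomparable. For `N = p_1 ⋯ p_m` this holds at every `r` with
`N < r < 2N`.

Conversely, let `L` be a multiple of `N`. If a play is still in a cycle at time `L`, every history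
that player 0 confuses with it stays in the cycles up to `L`: one that left them did so before `L`
and then showed player 0 a visit to `u` or `y`. So player 0 knows everything player 1 knows. If the
play has left the cycles before `L`, player 1 knows everything player 0 knows: player 1 sees `x`
and `y`, and recognises a visit to `u` from the `y` that follows it.
-/

namespace GameGraph

variable {n : ℕ} {V : Type} {A B : Fin n → Type} (G : GameGraph n V A B)

theorem isHistory_playPrefix_iff {f : ℕ → V} {r : ℕ} :
    G.IsHistory (playPrefix f r) ↔ f 0 = G.init ∧ ∀ τ < r, G.step (f τ) (f (τ + 1)) := by
  have hhead : ((List.range (r + 1)).map f).head? = some (f 0) := by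
    simp [List.range_succ_eq_map]
  change _ ∧ List.IsChain _ _ ↔ _
  rw [playPrefix, hhead, List.isChain_map, List.isChain_range_succ, Option.some_inj]

theorem indist_playPrefix_iff {i : Fin n} {f g : ℕ → V} {r : ℕ} :
    G.Indist i (playPrefix f r) (playPrefix g r) ↔
      ∀ τ, 0 < τ → τ ≤ r → G.obs i (f τ) = G.obs i (g τ) := by
  simp only [Indist, obsSeq, playPrefix, List.range_succ_eq_map, List.map_cons, List.drop_one,
    List.tail_cons, List.map_map, List.map_eq_map_iff, List.mem_range, Function.comp_apply]
  refine ⟨fun h τ hτ hτr => ?_, fun h τ hτ => h (τ + 1) τ.succ_pos hτ⟩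
  obtain ⟨σ, rfl⟩ := Nat.exists_eq_succ_of_ne_zero hτ.ne'
  exact h σ hτr

theorem exists_eq_playPrefix {π : List V} (h : G.IsHistory π) :
    ∃ (f : ℕ → V) (r : ℕ), π = playPrefix f r := by
  have hπ : π ≠ [] := by rintro rfl; simp [IsHistory] at h
  refine ⟨fun τ => π.getD τ G.init, π.length - 1, List.ext_getElem ?_ fun τ h₁ h₂ => ?_⟩
  · simp [playPrefix, Nat.sub_add_cancel (List.length_pos_iff.2 hπ)]
  · simp [playPrefix, List.getElem?_eq_getElem h₁]

theorem infoSet_playPrefix_subset {i j : Fin n} {f : ℕ → V} {r : ℕ}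
    (h : ∀ g, G.IsHistory (playPrefix g r) →
      (∀ τ, 0 < τ → τ ≤ r → G.obs i (f τ) = G.obs i (g τ)) →
      ∀ τ, 0 < τ → τ ≤ r → G.obs j (f τ) = G.obs j (g τ)) :
    G.InfoSet i (playPrefix f r) ⊆ G.InfoSet j (playPrefix f r) := by
  rintro π ⟨hπ, hind⟩
  obtain ⟨g, s, rfl⟩ := G.exists_eq_playPrefix hπ
  obtain rfl : s = r := by
    simpa [Indist, obsSeq, playPrefix] using (congrArg List.length hind).symm
  exact ⟨hπ, G.indist_playPrefix_iff.2 (h g hπ (G.indist_playPrefix_iff.1 hind))⟩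

theorem not_infoSet_playPrefix_subset {i j : Fin n} {f g : ℕ → V} {r : ℕ} (hr : 0 < r)
    (hg : G.IsHistory (playPrefix g r))
    (hi : ∀ τ, 0 < τ → τ ≤ r → G.obs i (f τ) = G.obs i (g τ))
    (hj : G.obs j (f r) ≠ G.obs j (g r)) :
    ¬ G.InfoSet i (playPrefix f r) ⊆ G.InfoSet j (playPrefix f r) := fun hsub =>
  hj <| G.indist_playPrefix_iff.1 (hsub ⟨hg, G.indist_playPrefix_iff.2 hi⟩).2 r hr le_rfl

theorem histHI_iff_of_two {A B : Fin 2 → Type} (G : GameGraph 2 V A B) (π : List V) :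
    G.HistHI π ↔ G.InfoSet 0 π ⊆ G.InfoSet 1 π ∨ G.InfoSet 1 π ⊆ G.InfoSet 0 π := by
  refine ⟨fun h => h 0 1, fun h i j => ?_⟩
  fin_cases i <;> fin_cases j <;> simp_all [or_comm]

end GameGraph

namespace PrimeCycleGame

open GameGraph (playPrefix)
open Finset

instance (k : ℕ) : NeZero (Nat.nth Nat.Prime k) := ⟨(Nat.prime_nth_prime k).ne_zero⟩

variable {m : ℕ}

inductive Position (m : ℕ) : Type
  | init
  | x
  | u
  | y
  | cyc (k : Fin m) (j : ZMod (Nat.nth Nat.Prime k))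

open Position

def Position.equivSum : Position m ≃ Fin 4 ⊕ Σ k : Fin m, ZMod (Nat.nth Nat.Prime k) where
  toFun
    | init => .inl 0
    | x => .inl 1
    | u => .inl 2
    | y => .inl 3
    | cyc k j => .inr ⟨k, j⟩
  invFun
    | .inl i => ![init, x, u, y] i
    | .inr ⟨k, j⟩ => cyc k j
  left_inv v := by cases v <;> rfl
  right_inv := by rintro (i | ⟨k, j⟩) <;> [fin_cases i <;> rfl; rfl]

noncomputable instance : Fintype (Position m) := Fintype.ofEquiv _ Position.equivSum.symm

theorem card_position : Fintype.card (Position m) = 4 + ∑ k ∈ range m, Nat.nth Nat.Prime k := by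
  simp [Fintype.card_congr Position.equivSum, ZMod.card, Fin.sum_univ_eq_sum_range]

/-- The cycle position `cyc k j` is only visited at times `τ + 1` with `j = τ` in `ZMod p_k`, so
leaving the cycle (allowed when `j + 2 ≠ 0`) reaches `x` or `u` at a time not divisible by
`p_k`. -/
def Move : Position m → Position m → Prop
  | init, w => ∃ k, w = cyc k 0
  | cyc k j, w => w = cyc k (j + 1) ∨ (j + 2 ≠ 0 ∧ (w = x ∨ w = u))
  | x, w => w = y
  | u, w => w = y
  | y, w => w = x

def obs₀ : Position m → Fin 3
  | u | y => 1
  | _ => 0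

def obs₁ : Position m → Fin 3
  | x => 1
  | y => 2
  | _ => 0

def game (m : ℕ) (hm : 0 < m) : GameGraph 2 (Position m) (fun _ => Unit) (fun _ => Fin 3) where
  init := init
  move v _ w := Move v w
  noDeadEnd
    | init, _ => ⟨cyc ⟨0, hm⟩ 0, _, rfl⟩
    | cyc k j, _ => ⟨cyc k (j + 1), .inl rfl⟩
    | x, _ => ⟨y, rfl⟩
    | u, _ => ⟨y, rfl⟩
    | y, _ => ⟨x, rfl⟩
  obs := ![obs₀, obs₁]

variable {hm : 0 < m}

theorem game_isHistory_iff {g : ℕ → Position m} {r : ℕ} :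
    (game m hm).IsHistory (playPrefix g r) ↔ g 0 = init ∧ ∀ τ < r, Move (g τ) (g (τ + 1)) := by
  simp [GameGraph.isHistory_playPrefix_iff, game, GameGraph.step]

@[simp] theorem game_obs_zero : (game m hm).obs 0 = obs₀ := rfl
@[simp] theorem game_obs_one : (game m hm).obs 1 = obs₁ := rfl

def CycleRun (g : ℕ → Position m) (k : Fin m) (r : ℕ) : Prop := ∀ τ < r, g (τ + 1) = cyc k τ

def EscapesAt (g : ℕ → Position m) (t r : ℕ) : Prop :=
  (∃ k : Fin m, ¬ Nat.nth Nat.Prime k ∣ t) ∧ (g t = x ∨ g t = u) ∧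
    ∀ τ, t < τ → τ ≤ r → g τ = x ∨ g τ = y

theorem move_cyc_iff {k : Fin m} {τ : ℕ} {w : Position m} :
    Move (cyc k τ) w ↔ w = cyc k ↑(τ + 1) ∨ (¬ Nat.nth Nat.Prime k ∣ τ + 2 ∧ (w = x ∨ w = u)) := by
  rw [← ZMod.natCast_eq_zero_iff]
  push_cast
  rfl

theorem eq_x_or_y_of_move {v w : Position m} (hv : v = x ∨ v = u ∨ v = y) (h : Move v w) :
    w = x ∨ w = y := by
  rcases hv with rfl | rfl | rfl <;> simp_all [Move]

theorem cycleRun_or_escapesAt (hm : 0 < m) {g : ℕ → Position m} {r : ℕ} (h0 : g 0 = init)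
    (hg : ∀ τ < r, Move (g τ) (g (τ + 1))) : (∃ k, CycleRun g k r) ∨ ∃ t ≤ r, EscapesAt g t r := by
  induction r with
  | zero => exact .inl ⟨⟨0, hm⟩, fun _ h => absurd h (Nat.not_lt_zero _)⟩
  | succ r ih =>
    have hmove := hg r r.lt_succ_self
    rcases ih fun τ hτ => hg τ (hτ.trans r.lt_succ_self) with ⟨k, hk⟩ | ⟨t, htr, hk, ht, htail⟩
    · cases r with
      | zero =>
        rw [h0] at hmove
        obtain ⟨k', hk'⟩ := hmove
        refine .inl ⟨k', fun τ hτ => ?_⟩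
        obtain rfl : τ = 0 := by omega
        simpa using hk'
      | succ s =>
        rw [hk s s.lt_succ_self, move_cyc_iff] at hmove
        rcases hmove with hcyc | ⟨hdvd, hw⟩
        · refine .inl ⟨k, fun τ hτ => ?_⟩
          rcases Nat.lt_succ_iff_lt_or_eq.1 hτ with hτ | rfl
          exacts [hk τ hτ, hcyc]
        · exact .inr ⟨s + 2, le_rfl, ⟨k, hdvd⟩, hw, fun τ h₁ h₂ => by omega⟩
    · refine .inr ⟨t, htr.trans r.le_succ, hk, ht, fun τ h₁ h₂ => ?_⟩
      rcases Nat.lt_succ_iff_lt_or_eq.1 (Nat.lt_succ_of_le h₂) with hτ | rfl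
      · exact htail τ h₁ (Nat.lt_succ_iff.1 hτ)
      · refine eq_x_or_y_of_move ?_ hmove
        rcases htr.eq_or_lt with rfl | htr
        · exact ht.imp_right .inl
        · exact (htail r htr le_rfl).imp_right .inr

theorem CycleRun.exists_eq_cyc {g : ℕ → Position m} {k : Fin m} {r τ : ℕ} (hg : CycleRun g k r)
    (hτ : 0 < τ) (hτr : τ ≤ r) : ∃ j, g τ = cyc k j := by
  obtain ⟨σ, rfl⟩ := Nat.exists_eq_succ_of_ne_zero hτ.ne'
  exact ⟨_, hg σ hτr⟩

theorem infoSet_zero_subset_one {g : ℕ → Position m} {k : Fin m} {L : ℕ} (hg : CycleRun g k L)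
    (hL : ∀ k : Fin m, Nat.nth Nat.Prime k ∣ L) :
    (game m hm).InfoSet 0 (playPrefix g L) ⊆ (game m hm).InfoSet 1 (playPrefix g L) := by
  refine (game m hm).infoSet_playPrefix_subset fun g' hg' hobs τ hτ hτL => ?_
  obtain ⟨h0', hmove'⟩ := game_isHistory_iff.1 hg'
  have hobs₀ : ∀ σ, 0 < σ → σ ≤ L → obs₀ (g' σ) = 0 := fun σ hσ hσL => by
    obtain ⟨j, hj⟩ := hg.exists_eq_cyc hσ hσL
    simpa [hj, obs₀] using (hobs σ hσ hσL).symm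
  obtain ⟨j, hj⟩ := hg.exists_eq_cyc hτ hτL
  rcases cycleRun_or_escapesAt hm h0' hmove' with ⟨k', hk'⟩ | ⟨t, htL, ⟨k', hk't⟩, ht, -⟩
  · obtain ⟨j', hj'⟩ := hk'.exists_eq_cyc hτ hτL
    simp [hj, hj', obs₁]
  · have htL : t < L := htL.lt_of_ne (by rintro rfl; exact hk't (hL k'))
    have ht0 : 0 < t := Nat.pos_of_ne_zero (by rintro rfl; exact hk't (dvd_zero _))
    rcases ht with hx | hu
    · have hy : g' (t + 1) = y := by simpa [hx, Move] using hmove' t htL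
      simpa [hy, obs₀] using hobs₀ (t + 1) t.succ_pos htL
    · simpa [hu, obs₀] using hobs₀ t ht0 htL.le

theorem eq_u_iff_of_move {v w : Position m} (h : Move v w) : v = u ↔ obs₁ v = 0 ∧ obs₁ w = 2 := by
  cases v <;> cases w <;> simp_all [Move, obs₁]

theorem obs₀_eq_of_obs₁_eq {v w : Position m} (h₁ : obs₁ v = obs₁ w) (hu : v = u ↔ w = u) :
    obs₀ v = obs₀ w := by
  cases v <;> cases w <;> simp_all [obs₀, obs₁]

theorem infoSet_one_subset_zero {g : ℕ → Position m} {r : ℕ}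
    (hg : (game m hm).IsHistory (playPrefix g r)) (hr : g r = x ∨ g r = y) :
    (game m hm).InfoSet 1 (playPrefix g r) ⊆ (game m hm).InfoSet 0 (playPrefix g r) := by
  refine (game m hm).infoSet_playPrefix_subset fun g' hg' hobs τ hτ hτr => ?_
  simp only [game_obs_one, game_obs_zero] at hobs ⊢
  refine obs₀_eq_of_obs₁_eq (hobs τ hτ hτr) ?_
  rcases hτr.lt_or_eq with hτr | rfl
  · rw [eq_u_iff_of_move ((game_isHistory_iff.1 hg).2 τ hτr),
      eq_u_iff_of_move ((game_isHistory_iff.1 hg').2 τ hτr), hobs τ hτ hτr.le,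
      hobs (τ + 1) τ.succ_pos hτr]
  · have h₁ : obs₁ (g τ) ≠ 0 := by rcases hr with h | h <;> simp [h, obs₁]
    refine iff_of_false (fun h => h₁ (by simp [h, obs₁])) fun h => h₁ ?_
    rw [hobs τ hτ le_rfl, h]
    rfl

theorem recurringHI : (game m hm).RecurringHI := by
  intro g hg T
  set L := (∏ k ∈ range m, Nat.nth Nat.Prime k) * (T + 1)
  have hL : ∀ k : Fin m, Nat.nth Nat.Prime k ∣ L := fun k =>
    (dvd_prod_of_mem _ (mem_range.2 k.2)).mul_right _
  have hTL : T ≤ L :=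
    (Nat.le_succ T).trans (Nat.le_mul_of_pos_left _ (prod_pos fun _ _ => Nat.pos_of_neZero _))
  refine ⟨L, hTL, (GameGraph.histHI_iff_of_two _ _).2 ?_⟩
  obtain ⟨h0, hmove⟩ := game_isHistory_iff.1 (hg L)
  rcases cycleRun_or_escapesAt hm h0 hmove with ⟨k, hk⟩ | ⟨t, htL, ⟨k, hkt⟩, -, htail⟩
  · exact .inl (infoSet_zero_subset_one hk hL)
  · have htL : t < L := htL.lt_of_ne (by rintro rfl; exact hkt (hL k))
    exact .inr (infoSet_one_subset_zero (hg L) (htail L htL le_rfl))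

noncomputable def cyclePlay (k : Fin m) : ℕ → Position m
  | 0 => init
  | τ + 1 => cyc k τ

noncomputable def exitPlay (k : Fin m) (t : ℕ) (w : Position m) (τ : ℕ) : Position m :=
  if τ < t then cyclePlay k τ else w

@[simp] theorem obs₀_cyclePlay (k : Fin m) (τ : ℕ) : obs₀ (cyclePlay k τ) = 0 := by
  cases τ <;> rfl

@[simp] theorem obs₁_cyclePlay (k : Fin m) (τ : ℕ) : obs₁ (cyclePlay k τ) = 0 := by
  cases τ <;> rfl

theorem move_cyclePlay (k : Fin m) (τ : ℕ) : Move (cyclePlay k τ) (cyclePlay k (τ + 1)) := by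
  cases τ with
  | zero => exact ⟨k, by simp [cyclePlay]⟩
  | succ τ => exact move_cyc_iff.2 (.inl rfl)

theorem cyclePlay_isPlay (k : Fin m) : (game m hm).IsPlay (cyclePlay k) :=
  fun _ => game_isHistory_iff.2 ⟨rfl, fun τ _ => move_cyclePlay k τ⟩

theorem exitPlay_isHistory {k : Fin m} {t : ℕ} {w : Position m} (ht : 2 ≤ t)
    (hkt : ¬ Nat.nth Nat.Prime k ∣ t) (hw : w = x ∨ w = u) :
    (game m hm).IsHistory (playPrefix (exitPlay k t w) t) := by
  refine game_isHistory_iff.2 ⟨if_pos (by omega), fun τ hτ => ?_⟩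
  rcases (Nat.succ_le_of_lt hτ).lt_or_eq with hτ | hτ
  · simpa [exitPlay, hτ, hτ.trans' τ.lt_succ_self] using move_cyclePlay k τ
  · subst hτ
    obtain ⟨σ, rfl⟩ : ∃ σ, τ = σ + 1 := ⟨τ - 1, by omega⟩
    simp only [exitPlay, Nat.lt_succ_self, lt_irrefl, if_true, if_false]
    exact move_cyc_iff.2 (.inr ⟨by simpa [add_assoc] using hkt, hw⟩)

theorem not_histHI_cyclePlay (k₀ : Fin m) {k : Fin m} {r : ℕ} (hr : 2 ≤ r)
    (hkr : ¬ Nat.nth Nat.Prime k ∣ r) : ¬ (game m hm).HistHI (playPrefix (cyclePlay k₀) r) := by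
  have hexit : ∀ w, exitPlay k r w r = w := fun w => if_neg (lt_irrefl r)
  rw [GameGraph.histHI_iff_of_two, not_or]
  constructor
  · refine (game m hm).not_infoSet_playPrefix_subset (by omega)
      (exitPlay_isHistory hr hkr (.inl rfl)) (fun τ _ _ => ?_)
      (by rw [game_obs_one, hexit, obs₁_cyclePlay]; exact Fin.zero_ne_one)
    simp only [game_obs_zero, obs₀_cyclePlay, exitPlay]
    split_ifs
    exacts [(obs₀_cyclePlay k τ).symm, rfl]
  · refine (game m hm).not_infoSet_playPrefix_subset (by omega)
      (exitPlay_isHistory hr hkr (.inr rfl)) (fun τ _ _ => ?_)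
      (by rw [game_obs_zero, hexit, obs₀_cyclePlay]; exact Fin.zero_ne_one)
    simp only [game_obs_one, obs₁_cyclePlay, exitPlay]
    split_ifs
    exacts [(obs₁_cyclePlay k τ).symm, rfl]

theorem exists_not_nth_prime_dvd {r : ℕ} (h : ¬ (∏ k ∈ range m, Nat.nth Nat.Prime k) ∣ r) :
    ∃ k : Fin m, ¬ Nat.nth Nat.Prime k ∣ r := by
  by_contra! hall
  refine h (prod_dvd_of_isRelPrime (fun i _ j _ hij => ?_) fun k hk => hall ⟨k, mem_range.1 hk⟩)
  exact Nat.coprime_iff_isRelPrime.1 <| (Nat.coprime_primes (Nat.prime_nth_prime i)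
    (Nat.prime_nth_prime j)).2 ((Nat.nth_injective Nat.infinite_setOfPred_prime).ne hij)

theorem two_le_prod_nth_prime (hm : 0 < m) : 2 ≤ ∏ k ∈ range m, Nat.nth Nat.Prime k :=
  (Nat.prime_nth_prime 0).two_le.trans <| Nat.le_of_dvd (prod_pos fun _ _ => Nat.pos_of_neZero _)
    (dvd_prod_of_mem _ (mem_range.2 hm))

theorem isGap_cyclePlay (k₀ : Fin m) :
    (game m hm).IsGap (cyclePlay k₀) (∏ k ∈ range m, Nat.nth Nat.Prime k + 1)
      (∏ k ∈ range m, Nat.nth Nat.Prime k - 2) := by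
  have hN := two_le_prod_nth_prime hm
  intro r hr₁ hr₂
  obtain ⟨k, hkr⟩ := exists_not_nth_prime_dvd (m := m) (r := r)
    (Nat.not_dvd_of_lt_of_lt_mul_succ (k := 1) (by omega) (by omega))
  exact not_histHI_cyclePlay k₀ (by omega) hkr

end PrimeCycleGame

/-- For every `m ≥ 1`, with `p₁ < ⋯ < p_m` the first `m` primes, there is a
two-player game graph with at most `4 + (p₁ + ⋯ + p_m)` positions that yields recurring
hierarchical information and has a play containing a gap of length at least `p₁ ⋯ p_m − 1`. -/
theorem statement18 (m : ℕ) (hm : 1 ≤ m) :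
    ∃ (V : Type) (_ : Fintype V) (A B : Fin 2 → Type)
      (_ : ∀ i, Fintype (A i)) (_ : ∀ i, Fintype (B i))
      (G : GameGraph 2 V A B),
      Fintype.card V ≤ 4 + ∑ k ∈ Finset.range m, Nat.nth Nat.Prime k ∧
      G.RecurringHI ∧
      ∃ f, G.IsPlay f ∧ ∃ t ℓ, G.IsGap f t ℓ ∧
        (∏ k ∈ Finset.range m, Nat.nth Nat.Prime k) - 1 ≤ ℓ + 1 := by
  have hN := PrimeCycleGame.two_le_prod_nth_prime hm
  open PrimeCycleGame in
  exact ⟨Position m, inferInstance, _, _, fun _ => inferInstance, fun _ => inferInstance, game m hm,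
    card_position.le, recurringHI, cyclePlay ⟨0, hm⟩, cyclePlay_isPlay _, _, _, isGap_cyclePlay _,
    by omega⟩
end
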